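/- arXiv:2406.04646 — 7 statements merged into one kernel-verified Lean document; each statement's English description precedes it below -/
import Mathlib

section
/- Approximate sufficient descent for one inexact Bregman proximal DC step (Lemma 3.1). Let x, x⁺ ∈ dom P₁ ∩ U ∩ X, ξ ∈ ∂P₂(x), γ > 0, δ ≥ 0, and suppose there exists d ∈ ∂_δ P₁(x⁺) such that Δ = d + ∇f(x) − ξ + γ(∇φ(x⁺) − ∇φ(x)). Then F(x⁺) − F(x) ≤ −(γ − L)·D_φ(x⁺, x) − γ·D_φ(x, x⁺) + |⟨Δ, x⁺ − x⟩| + δ, where F := P₁ − P₂ + f. -/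
open Filter Topology Bornology RealInnerProductSpace
open scoped Classical

noncomputable section

/-- `ℝⁿ` with the Euclidean inner product. -/
abbrev E (n : ℕ) := EuclideanSpace ℝ (Fin n)

/-- Bregman distance `D_φ(x, y) = φ(x) − φ(y) − ⟨∇φ(y), x − y⟩` associated with the
kernel `φ` whose gradient is `φ'`. -/
def breg {n : ℕ} (φ : E n → ℝ) (φ' : E n → E n) (x y : E n) : ℝ :=
  φ x - φ y - ⟪φ' y, x - y⟫

/-- `ε`-subdifferential at `x` of the extended-real-valued convex function that is equal
to `h` on its domain `S` and `+∞` outside `S`: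
`∂_ε h(x) = {d : h(y) ≥ h(x) + ⟨d, y − x⟩ − ε for all y}` (the inequality being automatic
for `y ∉ S`). -/
def epsSubdiff {n : ℕ} (S : Set (E n)) (h : E n → ℝ) (ε : ℝ) (x : E n) : Set (E n) :=
  {d | ∀ y ∈ S, h x + ⟪d, y - x⟫ - ε ≤ h y}

/-- **Lemma 3.1 (Approximate sufficient descent).** One inexact Bregman proximal DC step. -/
theorem approx_sufficient_descent
    {n : ℕ} (S U X : Set (E n)) (P₁ P₂ f φ : E n → ℝ)
    (f' φ' : E n → E n) (L : ℝ)
    -- `P₁` is proper, lower semicontinuous and convex (domain `S`, real values `P₁` on `S`)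
    (hSne : S.Nonempty)
    (hP₁conv : ConvexOn ℝ S P₁)
    (hP₁lsc : LowerSemicontinuous (fun y => if y ∈ S then (P₁ y : EReal) else (⊤ : EReal)))
    -- `P₂` is convex and continuous
    (hP₂conv : ConvexOn ℝ Set.univ P₂) (hP₂cont : Continuous P₂)
    -- `f` and `φ` are differentiable on the open convex set `U`, `φ` strictly convex on `U`
    (hUopen : IsOpen U) (hUconv : Convex ℝ U)
    (hfdiff : ∀ u ∈ U, HasGradientAt f (f' u) u)
    (hφdiff : ∀ u ∈ U, HasGradientAt φ (φ' u) u)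
    (hφsc : StrictConvexOn ℝ U φ)
    -- `(f, φ)` is `L`-smooth adaptable restricted on `X`
    (hL : 0 ≤ L)
    (hsmad : ∀ u ∈ X, ∀ v ∈ X, |f v - f u - ⟪f' u, v - u⟫| ≤ L * breg φ φ' v u)
    -- the step data
    (x xp : E n) (hx : x ∈ S ∩ U ∩ X) (hxp : xp ∈ S ∩ U ∩ X)
    (ξ : E n) (hξ : ξ ∈ epsSubdiff Set.univ P₂ 0 x)
    (γ δ : ℝ) (hγ : 0 < γ) (hδ : 0 ≤ δ)
    (d Δ : E n) (hd : d ∈ epsSubdiff S P₁ δ xp)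
    (hΔ : Δ = d + f' x - ξ + γ • (φ' xp - φ' x)) :
    (P₁ xp - P₂ xp + f xp) - (P₁ x - P₂ x + f x)
      ≤ -(γ - L) * breg φ φ' xp x - γ * breg φ φ' x xp + |⟪Δ, xp - x⟫| + δ := by

  have h1 := hd x hx.1.1
  have h2 := hξ xp (Set.mem_univ _)
  have h3 := (abs_le.mp (hsmad x hx.2 xp hxp.2)).2
  have habs : ⟪Δ, xp - x⟫ ≤ |⟪Δ, xp - x⟫| := le_abs_self _
  have hkey : ⟪Δ, xp - x⟫ = ⟪d, xp - x⟫ + ⟪f' x, xp - x⟫ - ⟪ξ, xp - x⟫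
      + γ * breg φ φ' xp x + γ * breg φ φ' x xp := by
    rw [hΔ]
    simp only [breg, inner_add_left, inner_sub_left, inner_sub_right,
      real_inner_smul_left]
    ring
  have hflip : ⟪d, x - xp⟫ = -⟪d, xp - x⟫ := by
    simp only [inner_sub_right]; ring
  rw [hflip] at h1
  linarith [h1, h2, h3, habs, hkey]
end
end

section
/- Summability for iBPDCA with (SC1) (Proposition 3.1(iii)-(iv)). In the iBPDCA setting with stopping criterion (SC1), if F is bounded below with ζ := lim_{k→∞} F(x^k), then Σ_{k=0}^∞ D_φ(x^{k+1}, x^k) ≤ (F(x^0) − ζ)/((1−σ)γ_min − L) < ∞ and Σ_{k=0}^∞ D_φ(x^k, x^{k+1}) ≤ (F(x^0) − ζ)/γ_min < ∞; consequently D_φ(x^{k+1}, x^k) → 0 and D_φ(x^k, x^{k+1}) → 0. Moreover Σ_{k=0}^∞ (‖Δ^k‖² + |⟨Δ^k, x^{k+1} − x^k⟩| + δ_k) ≤ σγ_max Σ_{k=0}^∞ D_φ(x^{k+1}, x^k) < ∞, hence ‖Δ^k‖ → 0, |⟨Δ^k, x^{k+1} − x^k⟩| → 0 and δ_k → 0.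 -/
open Filter Topology Bornology RealInnerProductSpace
open scoped Classical

noncomputable section

/-! The ε-subgradient inequalities for `P₁` and `P₂`, the upper half of `L`-smad and (SC1)
combine into the sufficient decrease
`((1 - σ)γ_min - L) D_φ(x^{k+1}, x^k) + γ_min D_φ(x^k, x^{k+1}) ≤ F(x^k) - F(x^{k+1})`,
where `γ_k ⟨∇φ(x^{k+1}) - ∇φ(x^k), x^{k+1} - x^k⟩` splits into the two Bregman distances.
Both distances are nonnegative since `φ` is convex, so `F(x^k)` decreases to `ζ` and the
telescoping partial sums are bounded by `F(x^0) - ζ`. (SC1) dominates the residuals by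
`σ γ_max D_φ(x^{k+1}, x^k)`, and the terms of a convergent series tend to zero. -/

theorem ConvexOn.add_inner_le_of_hasGradientAt {F : Type*} [NormedAddCommGroup F]
    [InnerProductSpace ℝ F] [CompleteSpace F] {U : Set F} {φ : F → ℝ} {g x y : F}
    (hφ : ConvexOn ℝ U φ) (hx : x ∈ U) (hy : y ∈ U) (hg : HasGradientAt φ g y) :
    φ y + ⟪g, x - y⟫ ≤ φ x := by
  set ℓ : ℝ →ᵃ[ℝ] F := AffineMap.lineMap y x
  have hline : ConvexOn ℝ (ℓ ⁻¹' U) (φ ∘ ℓ) := hφ.comp_affineMap ℓ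
  have hderiv : HasDerivAt (φ ∘ ℓ) ⟪g, x - y⟫ 0 := by
    have hℓ : HasDerivAt ℓ (x - y) 0 := AffineMap.hasDerivAt_lineMap
    simpa using hg.hasFDerivAt.comp_hasDerivAt_of_eq (0 : ℝ) hℓ (by simp [ℓ])
  have := hline.le_slope_of_hasDerivAt (x := 0) (y := 1) (by simpa [ℓ] using hy)
    (by simpa [ℓ] using hx) one_pos hderiv
  simp only [slope_def_field, sub_zero, div_one, Function.comp_apply, ℓ,
    AffineMap.lineMap_apply_zero, AffineMap.lineMap_apply_one] at this
  linarith

theorem breg_nonneg {n : ℕ} {U : Set (E n)} {φ : E n → ℝ} {φ' : E n → E n} {x y : E n}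
    (hφ : ConvexOn ℝ U φ) (hx : x ∈ U) (hy : y ∈ U) (hg : HasGradientAt φ (φ' y) y) :
    0 ≤ breg φ φ' x y := by
  have := hφ.add_inner_le_of_hasGradientAt hx hy hg
  unfold breg
  linarith

theorem inner_sub_sub_eq_breg_add_breg {n : ℕ} (φ : E n → ℝ) (φ' : E n → E n) (x y : E n) :
    ⟪φ' x - φ' y, x - y⟫ = breg φ φ' x y + breg φ φ' y x := by
  simp only [breg, inner_sub_left, inner_sub_right]
  ring

theorem summable_and_tsum_le_of_mul_le_sub_succ {a F : ℕ → ℝ} {c ζ : ℝ} (hc : 0 < c)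
    (ha : ∀ k, 0 ≤ a k) (hle : ∀ k, c * a k ≤ F k - F (k + 1))
    (hF : Tendsto F atTop (𝓝 ζ)) :
    Summable a ∧ ∑' k, a k ≤ (F 0 - ζ) / c := by
  have hanti : Antitone F :=
    antitone_nat_of_succ_le fun k => by linarith [hle k, mul_nonneg hc.le (ha k)]
  have hpartial : ∀ N, ∑ k ∈ Finset.range N, a k ≤ (F 0 - ζ) / c := by
    intro N
    rw [le_div_iff₀ hc, Finset.sum_mul]
    calc ∑ k ∈ Finset.range N, a k * c
        ≤ ∑ k ∈ Finset.range N, (F k - F (k + 1)) :=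
          Finset.sum_le_sum fun k _ => by linarith [hle k]
      _ = F 0 - F N := Finset.sum_range_sub' F N
      _ ≤ F 0 - ζ := by linarith [hanti.le_of_tendsto hF N]
  have hsum := summable_of_sum_range_le ha hpartial
  exact ⟨hsum, hsum.tsum_le_of_sum_range_le hpartial⟩

theorem tendsto_zero_of_add_add_of_nonneg {α : Type*} {l : Filter α} {a b c : α → ℝ}
    (ha : ∀ i, 0 ≤ a i) (hb : ∀ i, 0 ≤ b i) (hc : ∀ i, 0 ≤ c i)
    (h : Tendsto (fun i => a i + b i + c i) l (𝓝 0)) :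
    Tendsto a l (𝓝 0) ∧ Tendsto b l (𝓝 0) ∧ Tendsto c l (𝓝 0) :=
  ⟨squeeze_zero' (.of_forall ha) (.of_forall fun i => by linarith [hb i, hc i]) h,
    squeeze_zero' (.of_forall hb) (.of_forall fun i => by linarith [ha i, hc i]) h,
    squeeze_zero' (.of_forall hc) (.of_forall fun i => by linarith [ha i, hb i]) h⟩

theorem sufficient_decrease_of_inexact_step {n : ℕ} {S : Set (E n)} {P₁ P₂ f φ : E n → ℝ}
    {f' φ' : E n → E n} {L γ σ δ : ℝ} {u v ξ d Δ : E n} (hu : u ∈ S)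
    (hsmad : f v - f u - ⟪f' u, v - u⟫ ≤ L * breg φ φ' v u)
    (hξ : ξ ∈ epsSubdiff Set.univ P₂ 0 u) (hd : d ∈ epsSubdiff S P₁ δ v)
    (hΔ : Δ = d + f' u - ξ + γ • (φ' v - φ' u))
    (hstop : ⟪Δ, v - u⟫ + δ ≤ σ * γ * breg φ φ' v u) :
    ((1 - σ) * γ - L) * breg φ φ' v u + γ * breg φ φ' u v
      ≤ (P₁ u - P₂ u + f u) - (P₁ v - P₂ v + f v) := by
  have hP₁ := hd u hu
  have hP₂ := hξ v trivial
  have hinner : ⟪Δ, v - u⟫ = ⟪d, v - u⟫ + ⟪f' u, v - u⟫ - ⟪ξ, v - u⟫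
      + γ * (breg φ φ' v u + breg φ φ' u v) := by
    rw [hΔ, inner_add_left, inner_sub_left, inner_add_left, real_inner_smul_left,
      inner_sub_sub_eq_breg_add_breg]
  have hswap : ⟪d, u - v⟫ = -⟪d, v - u⟫ := by rw [← inner_neg_right, neg_sub]
  linarith

theorem ibpdca_sc1_summable_general
    {n : ℕ} (S U X : Set (E n)) (P₁ P₂ f φ : E n → ℝ)
    (f' φ' : E n → E n) (L γmin γmax σ : ℝ)
    (x : ℕ → E n) (γ δ : ℕ → ℝ) (ξ d Δ : ℕ → E n)
    -- `f` and `φ` are differentiable on the open convex set `U`, `φ` strictly convex on `U`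
    (hφdiff : ∀ u ∈ U, HasGradientAt φ (φ' u) u)
    (hφsc : StrictConvexOn ℝ U φ)
    -- `(f, φ)` is `L`-smooth adaptable restricted on `X`
    (hL : 0 ≤ L)
    (hsmad : ∀ u ∈ X, ∀ v ∈ X, |f v - f u - ⟪f' u, v - u⟫| ≤ L * breg φ φ' v u)
    -- the iterates and the inexact optimality condition
    (hxmem : ∀ k, x k ∈ S ∩ U ∩ X)
    (hLγ : L < γmin) (hγ : ∀ k, γmin ≤ γ k ∧ γ k ≤ γmax)
    (hδpos : ∀ k, 0 ≤ δ k)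
    (hξ : ∀ k, ξ k ∈ epsSubdiff Set.univ P₂ 0 (x k))
    (hd : ∀ k, d (k + 1) ∈ epsSubdiff S P₁ (δ k) (x (k + 1)))
    (hΔ : ∀ k, Δ k = d (k + 1) + f' (x k) - ξ k + γ k • (φ' (x (k + 1)) - φ' (x k)))
    -- the stopping criterion
    (hσ0 : 0 ≤ σ) (hσ : σ < (γmin - L) / γmin)
    (hSC1 : ∀ k, ‖Δ k‖ ^ 2 + |⟪Δ k, x (k + 1) - x k⟫| + δ k
        ≤ σ * γ k * breg φ φ' (x (k + 1)) (x k))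
    -- `F` is bounded below, and `ζ` is the limit of `F(x^k)`
    (ζ : ℝ) (hζ : Tendsto (fun k => P₁ (x k) - P₂ (x k) + f (x k)) atTop (𝓝 ζ)) :
    (Summable (fun k => breg φ φ' (x (k + 1)) (x k))
      ∧ ∑' k, breg φ φ' (x (k + 1)) (x k)
          ≤ ((P₁ (x 0) - P₂ (x 0) + f (x 0)) - ζ) / ((1 - σ) * γmin - L))
    ∧ (Summable (fun k => breg φ φ' (x k) (x (k + 1)))
      ∧ ∑' k, breg φ φ' (x k) (x (k + 1))
          ≤ ((P₁ (x 0) - P₂ (x 0) + f (x 0)) - ζ) / γmin)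
    ∧ Tendsto (fun k => breg φ φ' (x (k + 1)) (x k)) atTop (𝓝 0)
    ∧ Tendsto (fun k => breg φ φ' (x k) (x (k + 1))) atTop (𝓝 0)
    ∧ (Summable (fun k => ‖Δ k‖ ^ 2 + |⟪Δ k, x (k + 1) - x k⟫| + δ k)
      ∧ ∑' k, (‖Δ k‖ ^ 2 + |⟪Δ k, x (k + 1) - x k⟫| + δ k)
          ≤ σ * γmax * ∑' k, breg φ φ' (x (k + 1)) (x k))
    ∧ Tendsto (fun k => ‖Δ k‖) atTop (𝓝 0)
    ∧ Tendsto (fun k => |⟪Δ k, x (k + 1) - x k⟫|) atTop (𝓝 0)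
    ∧ Tendsto δ atTop (𝓝 0) := by
  set Dp := fun k => breg φ φ' (x (k + 1)) (x k)
  set Dm := fun k => breg φ φ' (x k) (x (k + 1))
  have hγmin : 0 < γmin := hL.trans_lt hLγ
  have hσγ : σ * γmin < γmin - L := (lt_div_iff₀ hγmin).1 hσ
  have hc : 0 < (1 - σ) * γmin - L := by linarith
  have hU k : x k ∈ U := (hxmem k).1.2
  have hDp k : 0 ≤ Dp k := breg_nonneg hφsc.convexOn (hU _) (hU _) (hφdiff _ (hU k))
  have hDm k : 0 ≤ Dm k := breg_nonneg hφsc.convexOn (hU _) (hU _) (hφdiff _ (hU (k + 1)))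
  have hdescent k : ((1 - σ) * γmin - L) * Dp k + γmin * Dm k
      ≤ (P₁ (x k) - P₂ (x k) + f (x k)) - (P₁ (x (k + 1)) - P₂ (x (k + 1)) + f (x (k + 1))) := by
    have hstep := sufficient_decrease_of_inexact_step (σ := σ) (hxmem k).1.1
      (abs_le.1 (hsmad _ (hxmem k).2 _ (hxmem (k + 1)).2)).2 (hξ k) (hd k) (hΔ k)
      (by linarith [hSC1 k, le_abs_self ⟪Δ k, x (k + 1) - x k⟫, sq_nonneg ‖Δ k‖])
    have hσ1 : σ ≤ 1 := by nlinarith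
    calc ((1 - σ) * γmin - L) * Dp k + γmin * Dm k
        ≤ ((1 - σ) * γ k - L) * Dp k + γ k * Dm k := by
          gcongr
          exacts [hDp k, (hγ k).1, hDm k, (hγ k).1]
      _ ≤ _ := hstep
  obtain ⟨hSp, htp⟩ := summable_and_tsum_le_of_mul_le_sub_succ hc hDp
    (fun k => by linarith [hdescent k, mul_nonneg hγmin.le (hDm k)]) hζ
  obtain ⟨hSm, htm⟩ := summable_and_tsum_le_of_mul_le_sub_succ hγmin hDm
    (fun k => by linarith [hdescent k, mul_nonneg hc.le (hDp k)]) hζ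
  have hres k : ‖Δ k‖ ^ 2 + |⟪Δ k, x (k + 1) - x k⟫| + δ k ≤ σ * γmax * Dp k :=
    (hSC1 k).trans (by gcongr; exacts [hDp k, (hγ k).2])
  have hSr := (hSp.mul_left (σ * γmax)).of_nonneg_of_le (fun k => by positivity [hδpos k]) hres
  obtain ⟨hΔsq, habs, hδ⟩ := tendsto_zero_of_add_add_of_nonneg (fun k => sq_nonneg ‖Δ k‖)
    (fun k => abs_nonneg _) hδpos hSr.tendsto_atTop_zero
  refine ⟨⟨hSp, htp⟩, ⟨hSm, htm⟩, hSp.tendsto_atTop_zero, hSm.tendsto_atTop_zero,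
    ⟨hSr, ?_⟩, by simpa using hΔsq.sqrt, habs, hδ⟩
  rw [← tsum_mul_left]
  exact hSr.tsum_le_tsum hres (hSp.mul_left _)

/-- **Proposition 3.1(iii)-(iv).** Summability for iBPDCA with (SC1). -/
theorem ibpdca_sc1_summable
    {n : ℕ} (S U X : Set (E n)) (P₁ P₂ f φ : E n → ℝ)
    (f' φ' : E n → E n) (L γmin γmax σ : ℝ)
    (x : ℕ → E n) (γ δ : ℕ → ℝ) (ξ d Δ : ℕ → E n)
    -- `P₁` is proper, lower semicontinuous and convex (domain `S`, real values `P₁` on `S`)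
    (hSne : S.Nonempty)
    (hP₁conv : ConvexOn ℝ S P₁)
    (hP₁lsc : LowerSemicontinuous (fun y => if y ∈ S then (P₁ y : EReal) else (⊤ : EReal)))
    -- `P₂` is convex and continuous
    (hP₂conv : ConvexOn ℝ Set.univ P₂) (hP₂cont : Continuous P₂)
    -- `f` and `φ` are differentiable on the open convex set `U`, `φ` strictly convex on `U`
    (hUopen : IsOpen U) (hUconv : Convex ℝ U)
    (hfdiff : ∀ u ∈ U, HasGradientAt f (f' u) u)
    (hφdiff : ∀ u ∈ U, HasGradientAt φ (φ' u) u)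
    (hφsc : StrictConvexOn ℝ U φ)
    -- `(f, φ)` is `L`-smooth adaptable restricted on `X`
    (hL : 0 ≤ L)
    (hsmad : ∀ u ∈ X, ∀ v ∈ X, |f v - f u - ⟪f' u, v - u⟫| ≤ L * breg φ φ' v u)
    -- the iterates and the inexact optimality condition
    (hxmem : ∀ k, x k ∈ S ∩ U ∩ X)
    (hLγ : L < γmin) (hγ : ∀ k, γmin ≤ γ k ∧ γ k ≤ γmax)
    (hδpos : ∀ k, 0 ≤ δ k)
    (hξ : ∀ k, ξ k ∈ epsSubdiff Set.univ P₂ 0 (x k))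
    (hd : ∀ k, d (k + 1) ∈ epsSubdiff S P₁ (δ k) (x (k + 1)))
    (hΔ : ∀ k, Δ k = d (k + 1) + f' (x k) - ξ k + γ k • (φ' (x (k + 1)) - φ' (x k)))
    -- the stopping criterion
    (hσ0 : 0 ≤ σ) (hσ : σ < (γmin - L) / γmin)
    (hSC1 : ∀ k, ‖Δ k‖ ^ 2 + |⟪Δ k, x (k + 1) - x k⟫| + δ k
        ≤ σ * γ k * breg φ φ' (x (k + 1)) (x k))
    -- `F` is bounded below, and `ζ` is the limit of `F(x^k)`
    (hFbdd : ∃ mlo : ℝ, ∀ y ∈ S, mlo ≤ P₁ y - P₂ y + f y)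
    (ζ : ℝ) (hζ : Tendsto (fun k => P₁ (x k) - P₂ (x k) + f (x k)) atTop (𝓝 ζ)) :
    (Summable (fun k => breg φ φ' (x (k + 1)) (x k))
      ∧ ∑' k, breg φ φ' (x (k + 1)) (x k)
          ≤ ((P₁ (x 0) - P₂ (x 0) + f (x 0)) - ζ) / ((1 - σ) * γmin - L))
    ∧ (Summable (fun k => breg φ φ' (x k) (x (k + 1)))
      ∧ ∑' k, breg φ φ' (x k) (x (k + 1))
          ≤ ((P₁ (x 0) - P₂ (x 0) + f (x 0)) - ζ) / γmin)
    ∧ Tendsto (fun k => breg φ φ' (x (k + 1)) (x k)) atTop (𝓝 0)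
    ∧ Tendsto (fun k => breg φ φ' (x k) (x (k + 1))) atTop (𝓝 0)
    ∧ (Summable (fun k => ‖Δ k‖ ^ 2 + |⟪Δ k, x (k + 1) - x k⟫| + δ k)
      ∧ ∑' k, (‖Δ k‖ ^ 2 + |⟪Δ k, x (k + 1) - x k⟫| + δ k)
          ≤ σ * γmax * ∑' k, breg φ φ' (x (k + 1)) (x k))
    ∧ Tendsto (fun k => ‖Δ k‖) atTop (𝓝 0)
    ∧ Tendsto (fun k => |⟪Δ k, x (k + 1) - x k⟫|) atTop (𝓝 0)
    ∧ Tendsto δ atTop (𝓝 0) :=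
  ibpdca_sc1_summable_general S U X P₁ P₂ f φ f' φ' L γmin γmax σ x γ δ ξ d Δ hφdiff hφsc hL hsmad
    hxmem hLγ hγ hδpos hξ hd hΔ hσ0 hσ hSC1 ζ hζ
end
end

section
/- Constancy of F on the cluster set (Proposition 4.1(ii)). Under the hypotheses of the global subsequential convergence setting, suppose additionally that (f, φ) is L-smooth adaptable restricted on a set X containing dom P₁ ∩ Q, and that ζ := lim_{k→∞} F(x^k) exists, where F := ι_Q + P₁ − P₂ + f. Then for every cluster point x* of {x^k}, one has F(x*) = ζ; that is, F is constant, equal to ζ, on the set of all cluster points of {x^k}. -/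
/-!
Let `x (ψ i) → x*` and reindex the subsequence as `x (χ i + 1)`. Strong convexity of `φ` turns
`D_φ(x^{k+1}, x^k) → 0` into `x^{k+1} - x^k → 0`, so also `x (χ i) → x*`. On the bounded set of
iterates `∇φ` is Lipschitz, which bounds `D_φ(x^k, x^0)`; by smooth adaptability `f` is then
bounded below along the iterates, so `P₁(x^k)` stays bounded above and lower semicontinuity puts
`x*` into `dom P₁`, while `x* ∈ Q` as `Q` is closed. Solving the inexact optimality condition for
`d^{k+1}` shows that it stays bounded along the subsequence, and the `δ_k`-subgradient inequality
tested at `x*` gives `limsup P₁(x (χ i + 1)) ≤ P₁(x*)`; with lower semicontinuity,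
`P₁(x (χ i + 1)) → P₁(x*)`. Continuity of `P₂` and `f` at `x*` then yields `F(x*) = ζ`.
-/

open Filter Topology Bornology RealInnerProductSpace
open scoped Classical

noncomputable section

open Asymptotics Metric Set

section Bregman

variable {n : ℕ} {φ : E n → ℝ} {φ' : E n → E n}

theorem breg_add_breg_swap (φ : E n → ℝ) (φ' : E n → E n) (u v : E n) :
    breg φ φ' v u + breg φ φ' u v = ⟪φ' v - φ' u, v - u⟫ := by
  simp only [breg, inner_sub_left, ← neg_sub v u, inner_neg_right]
  ring

theorem breg_le_mul_norm_sub_sq {s : Set (E n)} {K : NNReal} (hK : LipschitzOnWith K φ' s)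
    {u v : E n} (hu : u ∈ s) (hv : v ∈ s) (hnonneg : 0 ≤ breg φ φ' u v) :
    breg φ φ' v u ≤ K * ‖v - u‖ ^ 2 := by
  have hsum := breg_add_breg_swap φ φ' u v
  calc breg φ φ' v u ≤ ⟪φ' v - φ' u, v - u⟫ := by linarith
    _ ≤ ‖φ' v - φ' u‖ * ‖v - u‖ := real_inner_le_norm _ _
    _ ≤ K * ‖v - u‖ * ‖v - u‖ := by gcongr; exact hK.norm_sub_le hv hu
    _ = K * ‖v - u‖ ^ 2 := by ring

theorem bddBelow_image_of_smoothAdaptable {f : E n → ℝ} {f' : E n → E n} {L : ℝ}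
    {s : Set (E n)} {K : NNReal} (hs : IsBounded s) (hK : LipschitzOnWith K φ' s)
    (hnonneg : ∀ u ∈ s, ∀ v ∈ s, 0 ≤ breg φ φ' v u) (hL : 0 ≤ L)
    (hsmad : ∀ u ∈ s, ∀ v ∈ s, |f v - f u - ⟪f' u, v - u⟫| ≤ L * breg φ φ' v u) :
    BddBelow (f '' s) := by
  rcases s.eq_empty_or_nonempty with rfl | ⟨u, hu⟩
  · simp
  obtain ⟨R, hR⟩ := isBounded_iff.mp hs
  refine ⟨f u - ‖f' u‖ * R - L * (K * R ^ 2), ?_⟩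
  rintro _ ⟨v, hv, rfl⟩
  have hvu : ‖v - u‖ ≤ R := by simpa [dist_eq_norm] using hR hv hu
  have hinner : |⟪f' u, v - u⟫| ≤ ‖f' u‖ * R :=
    (abs_real_inner_le_norm _ _).trans (by gcongr)
  have hbreg : L * breg φ φ' v u ≤ L * (K * R ^ 2) := by
    gcongr
    exact (breg_le_mul_norm_sub_sq hK hu hv (hnonneg v hv u hu)).trans (by gcongr)
  linarith [(abs_le.mp (hsmad u hu v hv)).1, (abs_le.mp hinner).1]

end Bregman

section ExtendedValued

variable {α ι : Type*} [TopologicalSpace α] {S : Set α} {g : α → ℝ} {l : Filter ι}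
  {x : ι → α} {a : α}

theorem eventually_lt_of_lowerSemicontinuous_ite
    (hg : LowerSemicontinuous fun y => if y ∈ S then (g y : EReal) else ⊤)
    (hxS : ∀ i, x i ∈ S) (hx : Tendsto x l (𝓝 a)) {c : ℝ}
    (hc : (c : EReal) < if a ∈ S then (g a : EReal) else ⊤) : ∀ᶠ i in l, c < g (x i) := by
  filter_upwards [hx.eventually (hg a c hc)] with i hi
  simpa [hxS i] using hi

theorem mem_of_lowerSemicontinuous_ite [l.NeBot]
    (hg : LowerSemicontinuous fun y => if y ∈ S then (g y : EReal) else ⊤)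
    (hxS : ∀ i, x i ∈ S) (hx : Tendsto x l (𝓝 a)) {C : ℝ} (hle : ∀ᶠ i in l, g (x i) ≤ C) :
    a ∈ S := by
  by_contra ha
  obtain ⟨i, hlt, hle⟩ :=
    ((eventually_lt_of_lowerSemicontinuous_ite hg hxS hx (c := C) (by simp [ha])).and hle).exists
  linarith

theorem tendsto_of_lowerSemicontinuous_ite
    (hg : LowerSemicontinuous fun y => if y ∈ S then (g y : EReal) else ⊤)
    (hxS : ∀ i, x i ∈ S) (hx : Tendsto x l (𝓝 a)) (ha : a ∈ S) {u : ι → ℝ}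
    (hu : Tendsto u l (𝓝 0)) (hle : ∀ᶠ i in l, g (x i) ≤ g a + u i) :
    Tendsto (fun i => g (x i)) l (𝓝 (g a)) := by
  refine tendsto_order.2 ⟨fun c hc => ?_, fun c hc => ?_⟩
  · exact eventually_lt_of_lowerSemicontinuous_ite hg hxS hx (by simpa [ha] using hc)
  · have hlim : Tendsto (fun i => g a + u i) l (𝓝 (g a)) := by
      simpa using tendsto_const_nhds.add hu
    filter_upwards [hle, hlim.eventually_lt_const hc] with i h₁ h₂ using h₁.trans_lt h₂

theorem mem_of_lowerSemicontinuous_ite_of_tendsto [l.NeBot] {p q : α → ℝ} {m ζ : ℝ}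
    (hg : LowerSemicontinuous fun y => if y ∈ S then (g y : EReal) else ⊤)
    (hxS : ∀ i, x i ∈ S) (hx : Tendsto x l (𝓝 a)) (hp : ContinuousAt p a) (hq : ∀ i, m ≤ q (x i))
    (hζ : Tendsto (fun i => g (x i) - p (x i) + q (x i)) l (𝓝 ζ)) : a ∈ S := by
  refine mem_of_lowerSemicontinuous_ite hg hxS hx (C := ζ + 1 + (p a + 1) - m) ?_
  filter_upwards [hζ.eventually_lt_const (lt_add_one ζ),
    (hp.tendsto.comp hx).eventually_lt_const (lt_add_one _)] with i h₁ h₂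
  linarith [hq i, show p (x i) < p a + 1 from h₂]

end ExtendedValued

section Sequences

theorem tendsto_zero_of_mul_sq_norm_le {α ι : Type*} [SeminormedAddCommGroup α] {l : Filter ι}
    {a : ι → α} {b : ι → ℝ} {μ : ℝ} (hμ : 0 < μ) (hab : ∀ i, μ / 2 * ‖a i‖ ^ 2 ≤ b i)
    (hb : Tendsto b l (𝓝 0)) : Tendsto a l (𝓝 0) := by
  have hsq : Tendsto (fun i => ‖a i‖ ^ 2) l (𝓝 0) := by
    refine squeeze_zero (fun i => sq_nonneg _) (fun i => ?_) (by simpa using hb.const_mul (2 / μ))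
    rw [div_mul_eq_mul_div, le_div_iff₀ hμ]
    nlinarith [hab i]
  rw [tendsto_zero_iff_norm_tendsto_zero]
  simpa using hsq.sqrt

theorem exists_tendsto_comp_succ_of_strictMono {α : Type*} [TopologicalSpace α] {x : ℕ → α}
    {ψ : ℕ → ℕ} {a : α} (hψ : StrictMono ψ) (hx : Tendsto (fun i => x (ψ i)) atTop (𝓝 a)) :
    ∃ χ : ℕ → ℕ, Tendsto χ atTop atTop ∧ Tendsto (fun i => x (χ i + 1)) atTop (𝓝 a) := by
  have hψ_ge : ∀ i, i + 1 ≤ ψ (i + 1) := fun i => hψ.id_le (i + 1)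
  refine ⟨fun i => ψ (i + 1) - 1, tendsto_atTop_mono (fun i => ?_) tendsto_id, ?_⟩
  · have := hψ_ge i
    simp only [id]
    omega
  · have hsucc : ∀ i, ψ (i + 1) - 1 + 1 = ψ (i + 1) := fun i => by have := hψ_ge i; omega
    simpa only [hsucc, Function.comp_def] using hx.comp (tendsto_add_atTop_nat 1)

theorem tendsto_inner_zero_of_isBigO_one {n : ℕ} {ι : Type*} {l : Filter ι} {a b : ι → E n}
    (ha : a =O[l] fun _ => (1 : ℝ)) (hb : Tendsto b l (𝓝 0)) :
    Tendsto (fun i => ⟪a i, b i⟫) l (𝓝 0) := by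
  have hb' : (fun i => ‖b i‖) =o[l] fun _ => (1 : ℝ) :=
    (isLittleO_one_iff ℝ).2 (tendsto_zero_iff_norm_tendsto_zero.1 hb)
  refine (isLittleO_one_iff ℝ).1 ?_
  simpa using (isBoundedBilinearMap_inner (𝕜 := ℝ)).isBigO_comp.trans_isLittleO
    (ha.norm_left.mul_isLittleO hb')

theorem LipschitzOnWith.tendsto_sub_nhds_zero {α β ι : Type*} [SeminormedAddCommGroup α]
    [SeminormedAddCommGroup β] {f : α → β} {K : NNReal} {s : Set α} {l : Filter ι}
    (hf : LipschitzOnWith K f s) {a b : ι → α} (ha : ∀ i, a i ∈ s) (hb : ∀ i, b i ∈ s)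
    (hab : Tendsto (fun i => a i - b i) l (𝓝 0)) :
    Tendsto (fun i => f (a i) - f (b i)) l (𝓝 0) :=
  squeeze_zero_norm (fun i => hf.norm_sub_le (ha i) (hb i))
    (by simpa using (tendsto_norm_zero.comp hab).const_mul (K : ℝ))

end Sequences

section Subgradient

variable {n : ℕ} {h : E n → ℝ}

theorem mul_norm_le_of_mem_epsSubdiff {ε r C : ℝ} {x ξ : E n}
    (hξ : ξ ∈ epsSubdiff univ h ε x) (hr : 0 < r) (hC : ∀ y ∈ closedBall x r, |h y| ≤ C) :
    r * ‖ξ‖ ≤ 2 * C + ε := by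
  rcases eq_or_ne ξ 0 with rfl | hξ0
  · have hε := hξ x (mem_univ x)
    simp only [inner_zero_left, add_zero, sub_le_self_iff] at hε
    simp only [norm_zero, mul_zero]
    linarith [(abs_nonneg _).trans (hC x (mem_closedBall_self hr.le))]
  have hnorm : ‖ξ‖ ≠ 0 := norm_ne_zero_iff.mpr hξ0
  set y := x + (r / ‖ξ‖) • ξ
  have hy : y ∈ closedBall x r := by
    rw [mem_closedBall, dist_eq_norm, add_sub_cancel_left, norm_smul, Real.norm_eq_abs,
      abs_of_nonneg (by positivity), div_mul_cancel₀ _ hnorm]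
  have hinner : ⟪ξ, y - x⟫ = r * ‖ξ‖ := by
    rw [add_sub_cancel_left, real_inner_smul_right, real_inner_self_eq_norm_sq]
    field_simp
  have hsub := hξ y (mem_univ y)
  rw [hinner] at hsub
  linarith [(abs_le.mp (hC y hy)).2, (abs_le.mp (hC x (mem_closedBall_self hr.le))).1]

theorem exists_norm_le_of_mem_epsSubdiff (hh : Continuous h) {s : Set (E n)} (hs : IsBounded s)
    (ε : ℝ) : ∃ C, ∀ x ∈ s, ∀ ξ ∈ epsSubdiff univ h ε x, ‖ξ‖ ≤ C := by
  obtain ⟨R, hR⟩ := (isBounded_iff_subset_closedBall 0).mp hs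
  obtain ⟨C, hC⟩ :=
    (isCompact_closedBall (0 : E n) (R + 1)).exists_bound_of_continuousOn hh.continuousOn
  refine ⟨2 * C + ε, fun x hx ξ hξ => ?_⟩
  have hball : closedBall x 1 ⊆ closedBall 0 (R + 1) := by
    have := hR hx
    rw [mem_closedBall] at this
    exact closedBall_subset_closedBall' (by linarith)
  simpa using mul_norm_le_of_mem_epsSubdiff hξ one_pos fun y hy => hC y (hball hy)

theorem tendsto_of_mem_epsSubdiff {ι : Type*} {l : Filter ι} {S : Set (E n)} {x d : ι → E n}
    {δ : ι → ℝ} {a : E n} (hg : LowerSemicontinuous fun y => if y ∈ S then (h y : EReal) else ⊤)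
    (hxS : ∀ i, x i ∈ S) (hx : Tendsto x l (𝓝 a)) (ha : a ∈ S)
    (hd : ∀ i, d i ∈ epsSubdiff S h (δ i) (x i)) (hd_bdd : d =O[l] fun _ => (1 : ℝ))
    (hδ : Tendsto δ l (𝓝 0)) : Tendsto (fun i => h (x i)) l (𝓝 (h a)) := by
  refine tendsto_of_lowerSemicontinuous_ite hg hxS hx ha (u := fun i => ⟪d i, x i - a⟫ + δ i)
    ?_ (.of_forall fun i => ?_)
  · simpa using (tendsto_inner_zero_of_isBigO_one hd_bdd (tendsto_sub_nhds_zero_iff.2 hx)).add hδ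
  · have hsub := hd i a ha
    rw [← neg_sub (x i) a, inner_neg_right] at hsub
    linarith

end Subgradient

theorem isBigO_one_of_inexact_optimality {n : ℕ} {f' φ' : E n → E n} {x ξ d Δ : ℕ → E n}
    {γ : ℕ → ℝ} {χ : ℕ → ℕ} {xs : E n} {Cξ Cγ : ℝ}
    (hΔ : ∀ k, Δ k = d (k + 1) + f' (x k) - ξ k + γ k • (φ' (x (k + 1)) - φ' (x k)))
    (hΔ0 : Tendsto (fun k => ‖Δ k‖) atTop (𝓝 0)) (hξ : ∀ k, ‖ξ k‖ ≤ Cξ)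
    (hγ : ∀ k, |γ k| ≤ Cγ) (hφ' : Tendsto (fun k => φ' (x (k + 1)) - φ' (x k)) atTop (𝓝 0))
    (hχ : Tendsto χ atTop atTop) (hx : Tendsto (fun i => x (χ i)) atTop (𝓝 xs))
    (hf' : ContinuousAt f' xs) :
    (fun i => d (χ i + 1)) =O[atTop] fun _ => (1 : ℝ) := by
  have hd : ∀ k, d (k + 1) = Δ k - f' (x k) + ξ k - γ k • (φ' (x (k + 1)) - φ' (x k)) :=
    fun k => by rw [hΔ]; abel
  simp only [hd]
  have hγO : (fun i => γ (χ i)) =O[atTop] fun _ => (1 : ℝ) :=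
    isBigO_of_le' _ fun i => by simpa using hγ (χ i)
  refine ((((tendsto_zero_iff_norm_tendsto_zero.2 hΔ0).comp hχ).isBigO_one ℝ).sub
    ((hf'.tendsto.comp hx).isBigO_one ℝ) |>.add ?_).sub ?_
  · exact isBigO_of_le' _ fun i => by simpa using hξ (χ i)
  · simpa using hγO.smul ((hφ'.comp hχ).isBigO_one ℝ)

theorem F_constant_on_cluster_set_general
    {n : ℕ} (Q Nf U S X' : Set (E n)) (P₁ P₂ f φ : E n → ℝ)
    (f' φ' : E n → E n) (μ γmin γmax L : ℝ)
    (x : ℕ → E n) (γ δ : ℕ → ℝ) (ξ d Δ : ℕ → E n)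
    -- `Q` closed convex; `P₁` proper lsc convex (domain `S`); `P₂` convex continuous
    (hQclosed : IsClosed Q)
    (hP₁lsc : LowerSemicontinuous (fun y => if y ∈ S then (P₁ y : EReal) else (⊤ : EReal)))
    (hP₂cont : Continuous P₂)
    -- `f` continuously differentiable on an open set `Nf ⊇ dom P₁ ∩ Q`
    (hNfopen : IsOpen Nf) (hNfsub : S ∩ Q ⊆ Nf)
    (hfdiff : ∀ u ∈ Nf, HasGradientAt f (f' u) u)
    (hf'cont : ContinuousOn f' Nf)
    -- `φ` differentiable on the open convex set `U`, `dom P₁ ∩ Q ⊆ U ⊆ interior Q`,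
    -- `φ` μ-strongly convex on `U`, `∇φ` Lipschitz on bounded subsets of `U`
    (hSQU : S ∩ Q ⊆ U)
    (hμ : 0 < μ)
    (hφsconv : ∀ u ∈ U, ∀ v ∈ U, μ / 2 * ‖v - u‖ ^ 2 ≤ breg φ φ' v u)
    (hφ'lip : ∀ B : Set (E n), B ⊆ U → IsBounded B →
        ∃ Kl : NNReal, LipschitzOnWith Kl φ' B)
    -- `(f, φ)` is `L`-smooth adaptable restricted on `X' ⊇ dom P₁ ∩ Q`
    (hL : 0 ≤ L) (hSQX : S ∩ Q ⊆ X')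
    (hsmad : ∀ u ∈ X', ∀ v ∈ X', |f v - f u - ⟪f' u, v - u⟫| ≤ L * breg φ φ' v u)
    -- the bounded sequence of iterates and the inexact optimality condition
    (hxbdd : IsBounded (Set.range x))
    (hxmem : ∀ k, x k ∈ S ∩ interior Q)
    (hγmin : 0 < γmin) (hγ : ∀ k, γmin ≤ γ k ∧ γ k ≤ γmax)
    (hξ : ∀ k, ξ k ∈ epsSubdiff Set.univ P₂ 0 (x k))
    (hd : ∀ k, d (k + 1) ∈ epsSubdiff S P₁ (δ k) (x (k + 1)))
    (hΔ : ∀ k, Δ k = d (k + 1) + f' (x k) - ξ k + γ k • (φ' (x (k + 1)) - φ' (x k)))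
    -- vanishing quantities
    (hbreg0 : Tendsto (fun k => breg φ φ' (x (k + 1)) (x k)) atTop (𝓝 0))
    (hΔ0 : Tendsto (fun k => ‖Δ k‖) atTop (𝓝 0))
    (hδ0 : Tendsto δ atTop (𝓝 0))
    -- `ζ` is the limit of `F(x^k)`
    (ζ : ℝ) (hζ : Tendsto (fun k => P₁ (x k) - P₂ (x k) + f (x k)) atTop (𝓝 ζ)) :
    ∀ xs : E n,
      (∃ ψ : ℕ → ℕ, StrictMono ψ ∧ Tendsto (fun i => x (ψ i)) atTop (𝓝 xs)) →
      xs ∈ S ∧ xs ∈ Q ∧ P₁ xs - P₂ xs + f xs = ζ := by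
  rintro xs ⟨ψ, hψ, hconv⟩
  have hxSQ : ∀ k, x k ∈ S ∩ Q := fun k => ⟨(hxmem k).1, interior_subset (hxmem k).2⟩
  have hxU : range x ⊆ U := range_subset_iff.2 fun k => hSQU (hxSQ k)
  have hxX : range x ⊆ X' := range_subset_iff.2 fun k => hSQX (hxSQ k)
  obtain ⟨K, hK⟩ := hφ'lip _ hxU hxbdd
  obtain ⟨m, hm⟩ := bddBelow_image_of_smoothAdaptable hxbdd hK
    (fun u hu v hv => le_trans (by positivity) (hφsconv u (hxU hu) v (hxU hv))) hL
    fun u hu v hv => hsmad u (hxX hu) v (hxX hv)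
  obtain ⟨χ, hχ, hnext⟩ := exists_tendsto_comp_succ_of_strictMono hψ hconv
  have hstep : Tendsto (fun k => x (k + 1) - x k) atTop (𝓝 0) :=
    tendsto_zero_of_mul_sq_norm_le hμ
      (fun k => hφsconv _ (hxU ⟨k, rfl⟩) _ (hxU ⟨k + 1, rfl⟩)) hbreg0
  have hcur : Tendsto (fun i => x (χ i)) atTop (𝓝 xs) := by simpa using hnext.sub (hstep.comp hχ)
  have hF : Tendsto (fun i => P₁ (x (χ i + 1)) - P₂ (x (χ i + 1)) + f (x (χ i + 1))) atTop (𝓝 ζ) :=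
    hζ.comp ((tendsto_add_atTop_nat 1).comp hχ)
  have hxsS : xs ∈ S := mem_of_lowerSemicontinuous_ite_of_tendsto hP₁lsc (fun i => (hxSQ _).1)
    hnext hP₂cont.continuousAt (fun i => hm ⟨_, ⟨_, rfl⟩, rfl⟩) hF
  have hxsQ : xs ∈ Q := hQclosed.mem_of_tendsto hconv (.of_forall fun i => (hxSQ _).2)
  have hxsNf : xs ∈ Nf := hNfsub ⟨hxsS, hxsQ⟩
  obtain ⟨Cξ, hCξ⟩ := exists_norm_le_of_mem_epsSubdiff hP₂cont hxbdd 0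
  have hd_bdd := isBigO_one_of_inexact_optimality hΔ hΔ0 (fun k => hCξ _ ⟨k, rfl⟩ _ (hξ k))
    (fun k => (abs_of_pos (hγmin.trans_le (hγ k).1)).trans_le (hγ k).2)
    (hK.tendsto_sub_nhds_zero (fun k => ⟨k + 1, rfl⟩) (fun k => ⟨k, rfl⟩) hstep) hχ hcur
    (hf'cont.continuousAt (hNfopen.mem_nhds hxsNf))
  have hP₁ := tendsto_of_mem_epsSubdiff hP₁lsc (fun i => (hxSQ _).1) hnext hxsS (fun i => hd (χ i))
    hd_bdd (hδ0.comp hχ)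
  exact ⟨hxsS, hxsQ, tendsto_nhds_unique ((hP₁.sub (hP₂cont.continuousAt.tendsto.comp hnext)).add
    ((hfdiff xs hxsNf).continuousAt.tendsto.comp hnext)) hF⟩

/-- **Proposition 4.1(ii).** Constancy of `F = ι_Q + P₁ − P₂ + f` on the set of cluster
points of the iBPDCA iterates. -/
theorem F_constant_on_cluster_set
    {n : ℕ} (Q Nf U S X' : Set (E n)) (P₁ P₂ f φ : E n → ℝ)
    (f' φ' : E n → E n) (μ γmin γmax L : ℝ)
    (x : ℕ → E n) (γ δ : ℕ → ℝ) (ξ d Δ : ℕ → E n)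
    -- `Q` closed convex; `P₁` proper lsc convex (domain `S`); `P₂` convex continuous
    (hQclosed : IsClosed Q) (hQconv : Convex ℝ Q)
    (hSne : S.Nonempty) (hP₁conv : ConvexOn ℝ S P₁)
    (hP₁lsc : LowerSemicontinuous (fun y => if y ∈ S then (P₁ y : EReal) else (⊤ : EReal)))
    (hP₂conv : ConvexOn ℝ Set.univ P₂) (hP₂cont : Continuous P₂)
    -- `f` continuously differentiable on an open set `Nf ⊇ dom P₁ ∩ Q`
    (hNfopen : IsOpen Nf) (hNfsub : S ∩ Q ⊆ Nf)
    (hfdiff : ∀ u ∈ Nf, HasGradientAt f (f' u) u)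
    (hf'cont : ContinuousOn f' Nf)
    -- `φ` differentiable on the open convex set `U`, `dom P₁ ∩ Q ⊆ U ⊆ interior Q`,
    -- `φ` μ-strongly convex on `U`, `∇φ` Lipschitz on bounded subsets of `U`
    (hUopen : IsOpen U) (hUconv : Convex ℝ U)
    (hSQU : S ∩ Q ⊆ U) (hUintQ : U ⊆ interior Q)
    (hφdiff : ∀ u ∈ U, HasGradientAt φ (φ' u) u)
    (hμ : 0 < μ)
    (hφsconv : ∀ u ∈ U, ∀ v ∈ U, μ / 2 * ‖v - u‖ ^ 2 ≤ breg φ φ' v u)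
    (hφ'lip : ∀ B : Set (E n), B ⊆ U → IsBounded B →
        ∃ Kl : NNReal, LipschitzOnWith Kl φ' B)
    -- `(f, φ)` is `L`-smooth adaptable restricted on `X' ⊇ dom P₁ ∩ Q`
    (hL : 0 ≤ L) (hSQX : S ∩ Q ⊆ X')
    (hsmad : ∀ u ∈ X', ∀ v ∈ X', |f v - f u - ⟪f' u, v - u⟫| ≤ L * breg φ φ' v u)
    -- the bounded sequence of iterates and the inexact optimality condition
    (hxbdd : IsBounded (Set.range x))
    (hxmem : ∀ k, x k ∈ S ∩ interior Q)
    (hγmin : 0 < γmin) (hγ : ∀ k, γmin ≤ γ k ∧ γ k ≤ γmax)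
    (hδpos : ∀ k, 0 ≤ δ k)
    (hξ : ∀ k, ξ k ∈ epsSubdiff Set.univ P₂ 0 (x k))
    (hd : ∀ k, d (k + 1) ∈ epsSubdiff S P₁ (δ k) (x (k + 1)))
    (hΔ : ∀ k, Δ k = d (k + 1) + f' (x k) - ξ k + γ k • (φ' (x (k + 1)) - φ' (x k)))
    -- vanishing quantities
    (hbreg0 : Tendsto (fun k => breg φ φ' (x (k + 1)) (x k)) atTop (𝓝 0))
    (hΔ0 : Tendsto (fun k => ‖Δ k‖) atTop (𝓝 0))
    (hδ0 : Tendsto δ atTop (𝓝 0))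
    -- `ζ` is the limit of `F(x^k)`
    (ζ : ℝ) (hζ : Tendsto (fun k => P₁ (x k) - P₂ (x k) + f (x k)) atTop (𝓝 ζ)) :
    ∀ xs : E n,
      (∃ ψ : ℕ → ℕ, StrictMono ψ ∧ Tendsto (fun i => x (ψ i)) atTop (𝓝 xs)) →
      xs ∈ S ∧ xs ∈ Q ∧ P₁ xs - P₂ xs + f xs = ζ :=
  F_constant_on_cluster_set_general Q Nf U S X' P₁ P₂ f φ f' φ' μ γmin γmax L x γ δ ξ d Δ hQclosed
    hP₁lsc hP₂cont hNfopen hNfsub hfdiff hf'cont hSQU hμ hφsconv hφ'lip hL hSQX hsmad hxbdd hxmem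
    hγmin hγ hξ hd hΔ hbreg0 hΔ0 hδ0 ζ hζ
end
end

section
/- Abstract KL finite-length lemma (core argument of Theorems 4.2 and 4.3). Let {x^k} be a sequence in ℝⁿ, {Δ^k} a sequence in ℝⁿ with Σ_{k=0}^∞ ‖Δ^k‖ < ∞, {H_k} a sequence of real numbers, ζ ∈ ℝ, a > 0, b > 0, η > 0, K ≥ 1, and let ψ : [0, η) → [0, ∞) be concave, continuous at 0 with ψ(0) = 0, continuously differentiable on (0, η) with ψ' > 0 on (0, η). Suppose that for all k ≥ K: (i) ζ < H_k < ζ + η; (ii) H_k − H_{k+1} ≥ b·‖x^{k+1} − x^k‖²; (iii) ψ'(H_k − ζ)·(a·‖x^k − x^{k−1}‖ + ‖Δ^{k−1}‖) ≥ 1. Then Σ_{k=0}^∞ ‖x^{k+1} − x^k‖ < ∞, and consequently the sequence {x^k} converges. -/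
open Filter Topology Bornology RealInnerProductSpace
open scoped Classical

noncomputable section

/-!
Along the tail, concavity of `ψ` gives `ψ'(t_k) (t_k − t_{k+1}) ≤ ψ(t_k) − ψ(t_{k+1})` for
`t_k = H_k − ζ`. Combined with (ii) and (iii) this gives
`b ‖x^{k+1} − x^k‖² ≤ (ψ(t_k) − ψ(t_{k+1})) (a ‖x^k − x^{k−1}‖ + ‖Δ^{k−1}‖)`, and AM–GM turns it into
`2 ‖x^{k+1} − x^k‖ ≤ ‖x^k − x^{k−1}‖ + (a/b)(ψ(t_k) − ψ(t_{k+1})) + ‖Δ^{k−1}‖/a`.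
Summing, the `ψ`-terms telescope and `ψ ≥ 0`, so the partial sums of the step lengths are bounded.
-/

theorem ConcaveOn.mul_sub_le_sub_of_hasDerivAt {S : Set ℝ} {f : ℝ → ℝ} {f' x y : ℝ}
    (hf : ConcaveOn ℝ S f) (hx : x ∈ S) (hy : y ∈ S) (hxy : x ≤ y) (hf' : HasDerivAt f f' y) :
    f' * (y - x) ≤ f y - f x := by
  rcases hxy.eq_or_lt with rfl | hlt
  · simp
  · have := hf.le_slope_of_hasDerivAt hx hy hlt hf'
    rwa [slope_def_field, le_div_iff₀ (sub_pos.mpr hlt)] at this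

theorem two_mul_le_of_sufficient_decrease_of_kl {a b c d d' δ t s ψt ψs : ℝ}
    (ha : 0 < a) (hb : 0 < b) (hc : 0 < c) (hd' : 0 ≤ d') (hδ : 0 ≤ δ)
    (hdecr : b * d ^ 2 ≤ t - s) (htangent : c * (t - s) ≤ ψt - ψs)
    (hkl : 1 ≤ c * (a * d' + δ)) :
    2 * d ≤ d' + (a / b * ψt - a / b * ψs) + δ / a := by
  have hts : 0 ≤ t - s := (mul_nonneg hb.le (sq_nonneg d)).trans hdecr
  have hψ : 0 ≤ ψt - ψs := (mul_nonneg hc.le hts).trans htangent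
  have hsq : d ^ 2 ≤ (a / b * (ψt - ψs)) * (d' + δ / a) := by
    calc d ^ 2 ≤ (t - s) / b := by rw [le_div_iff₀ hb]; linarith
      _ ≤ (t - s) * (c * (a * d' + δ)) / b := by gcongr; exact le_mul_of_one_le_right hts hkl
      _ ≤ (ψt - ψs) * (a * d' + δ) / b := by rw [← mul_assoc, mul_comm (t - s)]; gcongr
      _ = (a / b * (ψt - ψs)) * (d' + δ / a) := by field_simp
  have := two_mul_le_add_of_sq_le_mul (by positivity) (by positivity) hsq
  linarith

theorem summable_of_two_mul_succ_le {d φ e : ℕ → ℝ} (hd : ∀ k, 0 ≤ d k) (hφ : ∀ k, 0 ≤ φ k)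
    (he : Summable e) (he₀ : ∀ k, 0 ≤ e k)
    (hstep : ∀ k, 2 * d (k + 1) ≤ d k + (φ k - φ (k + 1)) + e k) : Summable d := by
  have hinv : ∀ N, ∑ k ∈ Finset.range N, d (k + 1) + d N + φ N
      ≤ d 0 + φ 0 + ∑ k ∈ Finset.range N, e k := by
    intro N
    induction N with
    | zero => simp
    | succ N ih =>
      simp only [Finset.sum_range_succ]
      linarith [hstep N]
  refine (summable_nat_add_iff 1).mp <| summable_of_sum_range_le (c := d 0 + φ 0 + ∑' k, e k)
    (fun k => hd (k + 1)) fun N => ?_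
  linarith [hinv N, hd N, hφ N, he.sum_le_tsum (Finset.range N) fun k _ => he₀ k]

theorem summable_of_two_mul_succ_le_of_le {d φ e : ℕ → ℝ} {K : ℕ} (hd : ∀ k, 0 ≤ d k)
    (hφ : ∀ k, K ≤ k → 0 ≤ φ k) (he : Summable e) (he₀ : ∀ k, 0 ≤ e k)
    (hstep : ∀ k, K ≤ k → 2 * d (k + 1) ≤ d k + (φ k - φ (k + 1)) + e k) : Summable d :=
  (summable_nat_add_iff K).mp <|
    summable_of_two_mul_succ_le (φ := fun k => φ (k + K)) (fun k => hd (k + K))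
      (fun k => hφ _ (Nat.le_add_left K k)) ((summable_nat_add_iff K).mpr he) (fun k => he₀ _)
      fun k => by simpa only [Nat.add_right_comm k 1 K] using hstep (k + K) (Nat.le_add_left K k)

theorem kl_finite_length_general
    {n : ℕ} (x Δ : ℕ → E n) (H : ℕ → ℝ) (ζ a b η : ℝ) (K : ℕ)
    (ψ ψ' : ℝ → ℝ)
    (hΔsum : Summable (fun k => ‖Δ k‖))
    (ha : 0 < a) (hb : 0 < b)
    -- `ψ : [0, η) → [0, ∞)` is concave, continuous at `0` with `ψ(0) = 0`,
    -- continuously differentiable on `(0, η)` with `ψ' > 0` there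
    (hψnonneg : ∀ t ∈ Set.Ico (0 : ℝ) η, 0 ≤ ψ t)
    (hψconc : ConcaveOn ℝ (Set.Ico (0 : ℝ) η) ψ)
    (hψderiv : ∀ t ∈ Set.Ioo (0 : ℝ) η, HasDerivAt ψ (ψ' t) t)
    (hψ'pos : ∀ t ∈ Set.Ioo (0 : ℝ) η, 0 < ψ' t)
    -- the three properties for `k ≥ K`
    (h1 : ∀ k, K ≤ k → ζ < H k ∧ H k < ζ + η)
    (h2 : ∀ k, K ≤ k → b * ‖x (k + 1) - x k‖ ^ 2 ≤ H k - H (k + 1))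
    (h3 : ∀ k, K ≤ k → 1 ≤ ψ' (H k - ζ) * (a * ‖x k - x (k - 1)‖ + ‖Δ (k - 1)‖)) :
    Summable (fun k => ‖x (k + 1) - x k‖) ∧ ∃ xs, Tendsto x atTop (𝓝 xs) := by
  have hmem : ∀ k, K ≤ k → H k - ζ ∈ Set.Ioo (0 : ℝ) η := fun k hk =>
    ⟨sub_pos.mpr (h1 k hk).1, sub_lt_iff_lt_add'.mpr (h1 k hk).2⟩
  have hdecr : ∀ k, K ≤ k → b * ‖x (k + 1) - x k‖ ^ 2 ≤ (H k - ζ) - (H (k + 1) - ζ) :=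
    fun k hk => (h2 k hk).trans_eq (by ring)
  have hstep : ∀ k, K ≤ k → 2 * ‖x (k + 2) - x (k + 1)‖ ≤ ‖x (k + 1) - x k‖
      + (a / b * ψ (H (k + 1) - ζ) - a / b * ψ (H (k + 2) - ζ)) + ‖Δ k‖ / a := fun k hk => by
    have hk₁ : K ≤ k + 1 := hk.trans k.le_succ
    have hk₂ : K ≤ k + 2 := hk₁.trans (k + 1).le_succ
    have hle : H (k + 2) - ζ ≤ H (k + 1) - ζ := by
      linarith [hdecr (k + 1) hk₁, mul_nonneg hb.le (sq_nonneg ‖x (k + 2) - x (k + 1)‖)]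
    exact two_mul_le_of_sufficient_decrease_of_kl ha hb (hψ'pos _ (hmem _ hk₁)) (norm_nonneg _)
      (norm_nonneg _) (hdecr (k + 1) hk₁)
      (hψconc.mul_sub_le_sub_of_hasDerivAt (Set.Ioo_subset_Ico_self (hmem _ hk₂))
        (Set.Ioo_subset_Ico_self (hmem _ hk₁)) hle (hψderiv _ (hmem _ hk₁)))
      (h3 (k + 1) hk₁)
  have hsum : Summable fun k => ‖x (k + 1) - x k‖ :=
    summable_of_two_mul_succ_le_of_le (fun k => norm_nonneg _)
      (fun k hk => mul_nonneg (div_pos ha hb).le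
        (hψnonneg _ (Set.Ioo_subset_Ico_self (hmem _ (hk.trans k.le_succ)))))
      (hΔsum.div_const a) (fun k => div_nonneg (norm_nonneg _) ha.le) hstep
  refine ⟨hsum, cauchySeq_tendsto_of_complete (cauchySeq_of_summable_dist ?_)⟩
  exact hsum.congr fun k => by rw [dist_comm, dist_eq_norm, Nat.succ_eq_add_one]

/-- **Abstract KL finite-length lemma** (core argument of Theorems 4.2 and 4.3). -/
theorem kl_finite_length
    {n : ℕ} (x Δ : ℕ → E n) (H : ℕ → ℝ) (ζ a b η : ℝ) (K : ℕ)
    (ψ ψ' : ℝ → ℝ)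
    (hΔsum : Summable (fun k => ‖Δ k‖))
    (ha : 0 < a) (hb : 0 < b) (hη : 0 < η) (hK : 1 ≤ K)
    -- `ψ : [0, η) → [0, ∞)` is concave, continuous at `0` with `ψ(0) = 0`,
    -- continuously differentiable on `(0, η)` with `ψ' > 0` there
    (hψ0 : ψ 0 = 0)
    (hψnonneg : ∀ t ∈ Set.Ico (0 : ℝ) η, 0 ≤ ψ t)
    (hψconc : ConcaveOn ℝ (Set.Ico (0 : ℝ) η) ψ)
    (hψcont : ContinuousWithinAt ψ (Set.Ico (0 : ℝ) η) 0)
    (hψderiv : ∀ t ∈ Set.Ioo (0 : ℝ) η, HasDerivAt ψ (ψ' t) t)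
    (hψ'cont : ContinuousOn ψ' (Set.Ioo (0 : ℝ) η))
    (hψ'pos : ∀ t ∈ Set.Ioo (0 : ℝ) η, 0 < ψ' t)
    -- the three properties for `k ≥ K`
    (h1 : ∀ k, K ≤ k → ζ < H k ∧ H k < ζ + η)
    (h2 : ∀ k, K ≤ k → b * ‖x (k + 1) - x k‖ ^ 2 ≤ H k - H (k + 1))
    (h3 : ∀ k, K ≤ k → 1 ≤ ψ' (H k - ζ) * (a * ‖x k - x (k - 1)‖ + ‖Δ (k - 1)‖)) :
    Summable (fun k => ‖x (k + 1) - x k‖) ∧ ∃ xs, Tendsto x atTop (𝓝 xs) :=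
  kl_finite_length_general x Δ H ζ a b η K ψ ψ' hΔsum ha hb hψnonneg hψconc hψderiv hψ'pos h1 h2 h3
end
end

section
/- Quadratic sufficient decrease of the merit function under (SC2) (key inequality in the proof of Theorem 4.3). In the iBPDCA setting with stopping criterion (SC2), suppose in addition that φ is μ-strongly convex on U (i.e., D_φ(y, x) ≥ (μ/2)‖y − x‖² for all x, y ∈ U) with μ > 0, and that ∇φ is ℓ_φ-Lipschitz continuous on a set containing all iterates, so that D_φ(x^k, x^{k−1}) ≤ (ℓ_φ/2)‖x^k − x^{k−1}‖² for all k. If (2γ_min − L)·μ − σγ_max·ℓ_φ > 0, then, setting τ := σγ_max·ℓ_φ, b := ((2γ_min − L)·μ − σγ_max·ℓ_φ)/2 and H_τ(u, v) := F(u) + (τ/2)‖u − v‖², one has for every k: H_τ(x^k, x^{k−1}) − H_τ(x^{k+1}, x^k) ≥ b·‖x^{k+1} − x^k‖². -/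
open Filter Topology Bornology RealInnerProductSpace
open scoped Classical

noncomputable section

/-- `prevSeq x xm k` is `x^{k-1}`, with `x^{-1} := xm`. -/
def prevSeq {n : ℕ} (x : ℕ → E n) (xm : E n) : ℕ → E n :=
  fun k => if k = 0 then xm else x (k - 1)

/-- Quadratic sufficient decrease of the merit function `H_τ` under (SC2)
(key inequality in the proof of Theorem 4.3). -/
theorem ibpdca_sc2_quadratic_decrease
    {n : ℕ} (S U X : Set (E n)) (P₁ P₂ f φ : E n → ℝ)
    (f' φ' : E n → E n) (L γmin γmax σ : ℝ)
    (x : ℕ → E n) (xm : E n) (hxm : xm ∈ U) (γ δ : ℕ → ℝ) (ξ d Δ : ℕ → E n)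
    -- `P₁` is proper, lower semicontinuous and convex (domain `S`, real values `P₁` on `S`)
    (hSne : S.Nonempty)
    (hP₁conv : ConvexOn ℝ S P₁)
    (hP₁lsc : LowerSemicontinuous (fun y => if y ∈ S then (P₁ y : EReal) else (⊤ : EReal)))
    -- `P₂` is convex and continuous
    (hP₂conv : ConvexOn ℝ Set.univ P₂) (hP₂cont : Continuous P₂)
    -- `f` and `φ` are differentiable on the open convex set `U`, `φ` strictly convex on `U`
    (hUopen : IsOpen U) (hUconv : Convex ℝ U)
    (hfdiff : ∀ u ∈ U, HasGradientAt f (f' u) u)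
    (hφdiff : ∀ u ∈ U, HasGradientAt φ (φ' u) u)
    (hφsc : StrictConvexOn ℝ U φ)
    -- `(f, φ)` is `L`-smooth adaptable restricted on `X`
    (hL : 0 ≤ L)
    (hsmad : ∀ u ∈ X, ∀ v ∈ X, |f v - f u - ⟪f' u, v - u⟫| ≤ L * breg φ φ' v u)
    -- the iterates and the inexact optimality condition
    (hxmem : ∀ k, x k ∈ S ∩ U ∩ X)
    (hLγ : L < γmin) (hγ : ∀ k, γmin ≤ γ k ∧ γ k ≤ γmax)
    (hδpos : ∀ k, 0 ≤ δ k)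
    (hξ : ∀ k, ξ k ∈ epsSubdiff Set.univ P₂ 0 (x k))
    (hd : ∀ k, d (k + 1) ∈ epsSubdiff S P₁ (δ k) (x (k + 1)))
    (hΔ : ∀ k, Δ k = d (k + 1) + f' (x k) - ξ k + γ k • (φ' (x (k + 1)) - φ' (x k)))
    -- the stopping criterion
    (hσ0 : 0 ≤ σ) (hσ : σ < (γmin - L) / γmax)
    (hSC2 : ∀ k, ‖Δ k‖ ^ 2 + |⟪Δ k, x (k + 1) - x k⟫| + δ k
        ≤ σ * γ k * breg φ φ' (x k) (prevSeq x xm k))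
    -- `φ` is `μ`-strongly convex on `U`
    (μ : ℝ) (hμ : 0 < μ)
    (hφsconv : ∀ u ∈ U, ∀ v ∈ U, μ / 2 * ‖v - u‖ ^ 2 ≤ breg φ φ' v u)
    -- `∇φ` is `ℓφ`-Lipschitz on a set `W` containing all iterates, so that
    -- `D_φ(x^k, x^{k−1}) ≤ (ℓφ/2)‖x^k − x^{k−1}‖²`
    (ℓφ : ℝ) (hℓφ : 0 ≤ ℓφ) (W : Set (E n))
    (hxW : ∀ k, x k ∈ W) (hxmW : xm ∈ W)
    (hφ'lip : ∀ u ∈ W, ∀ v ∈ W, ‖φ' u - φ' v‖ ≤ ℓφ * ‖u - v‖)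
    (hDub : ∀ k, breg φ φ' (x k) (prevSeq x xm k)
        ≤ ℓφ / 2 * ‖x k - prevSeq x xm k‖ ^ 2)
    -- positivity of the decrease constant
    (hbpos : 0 < (2 * γmin - L) * μ - σ * γmax * ℓφ) :
    ∀ k, ((2 * γmin - L) * μ - σ * γmax * ℓφ) / 2 * ‖x (k + 1) - x k‖ ^ 2
      ≤ (P₁ (x k) - P₂ (x k) + f (x k)
            + σ * γmax * ℓφ / 2 * ‖x k - prevSeq x xm k‖ ^ 2)
        - (P₁ (x (k + 1)) - P₂ (x (k + 1)) + f (x (k + 1))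
            + σ * γmax * ℓφ / 2 * ‖x (k + 1) - x k‖ ^ 2) := by
  intro k
  -- abbreviations
  set a := x (k + 1) with ha
  set c := x k with hc
  set p := prevSeq x xm k with hp
  obtain ⟨⟨haS, haU⟩, haX⟩ := hxmem (k + 1)
  obtain ⟨⟨hcS, hcU⟩, hcX⟩ := hxmem k
  have hpU : p ∈ U := by
    rw [hp, prevSeq]
    split
    · exact hxm
    · exact (hxmem (k - 1)).1.2
  -- basic positivity facts
  have hγk := hγ k
  have hγk0 : (0 : ℝ) ≤ γ k := le_trans hL (le_of_lt (lt_of_lt_of_le hLγ hγk.1))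
  have hγmax0 : (0 : ℝ) ≤ γmax := le_trans hγk0 hγk.2
  have hγmin0 : (0 : ℝ) ≤ γmin := le_trans hL (le_of_lt hLγ)
  -- subgradient inequalities
  have h1 : P₁ a + ⟪d (k + 1), c - a⟫ - δ k ≤ P₁ c := hd k c hcS
  have h2 : P₂ c + ⟪ξ k, a - c⟫ - 0 ≤ P₂ a := hξ k a (Set.mem_univ a)
  have h3 : f a - f c - ⟪f' c, a - c⟫ ≤ L * breg φ φ' a c :=
    (abs_le.mp (hsmad c hcX a haX)).2
  -- express d (k+1) from Δ
  have hdval : d (k + 1) = Δ k - f' c + ξ k - γ k • (φ' a - φ' c) := by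
    rw [hΔ k]; abel
  have hinner : ⟪d (k + 1), c - a⟫
      = -⟪Δ k, a - c⟫ + ⟪f' c, a - c⟫ - ⟪ξ k, a - c⟫
        + γ k * (breg φ φ' a c + breg φ φ' c a) := by
    rw [hdval]
    simp only [breg, inner_sub_left, inner_add_left, real_inner_smul_left,
      inner_sub_right]
    ring
  -- bound on the inner product with Δ
  have habs : ⟪Δ k, a - c⟫ ≤ |⟪Δ k, a - c⟫| := le_abs_self _
  have hΔsq : (0 : ℝ) ≤ ‖Δ k‖ ^ 2 := sq_nonneg _
  have hSC2' : |⟪Δ k, a - c⟫| + δ k ≤ σ * γ k * breg φ φ' c p := by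
    have := hSC2 k
    rw [← ha, ← hc, ← hp] at this
    linarith
  -- strong convexity bounds
  have hDca : μ / 2 * ‖a - c‖ ^ 2 ≤ breg φ φ' c a := by
    have := hφsconv a haU c hcU
    rwa [norm_sub_rev] at this
  have hDac : μ / 2 * ‖a - c‖ ^ 2 ≤ breg φ φ' a c := hφsconv c hcU a haU
  have hsq : (0 : ℝ) ≤ μ / 2 * ‖a - c‖ ^ 2 := by positivity
  have hDca0 : (0 : ℝ) ≤ breg φ φ' c a := le_trans hsq hDca
  have hDac0 : (0 : ℝ) ≤ breg φ φ' a c := le_trans hsq hDac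
  have hDcp0 : (0 : ℝ) ≤ breg φ φ' c p := by
    have h := hφsconv p hpU c hcU
    have : (0 : ℝ) ≤ μ / 2 * ‖c - p‖ ^ 2 := by positivity
    linarith
  -- bound the SC2 right-hand side
  have hT : σ * γ k * breg φ φ' c p ≤ σ * γmax * (ℓφ / 2 * ‖c - p‖ ^ 2) := by
    have h1' : σ * γ k * breg φ φ' c p ≤ σ * γmax * breg φ φ' c p :=
      mul_le_mul_of_nonneg_right (mul_le_mul_of_nonneg_left hγk.2 hσ0) hDcp0
    have h2' : σ * γmax * breg φ φ' c p ≤ σ * γmax * (ℓφ / 2 * ‖c - p‖ ^ 2) := by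
      have hub := hDub k
      rw [← hc, ← hp] at hub
      exact mul_le_mul_of_nonneg_left hub (by positivity)
    linarith
  -- monotonicity in γ
  have hmul1 : γmin * breg φ φ' c a ≤ γ k * breg φ φ' c a :=
    mul_le_mul_of_nonneg_right hγk.1 hDca0
  have hmul2 : γmin * breg φ φ' a c ≤ γ k * breg φ φ' a c :=
    mul_le_mul_of_nonneg_right hγk.1 hDac0
  have hmul1' : γmin * (μ / 2 * ‖a - c‖ ^ 2) ≤ γmin * breg φ φ' c a :=
    mul_le_mul_of_nonneg_left hDca hγmin0
  have hmul2' : (γmin - L) * (μ / 2 * ‖a - c‖ ^ 2) ≤ (γmin - L) * breg φ φ' a c :=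
    mul_le_mul_of_nonneg_left hDac (by linarith)
  have hmul3 : L * breg φ φ' a c = γ k * breg φ φ' a c - (γ k - L) * breg φ φ' a c := by
    ring
  have hmul4 : (γmin - L) * breg φ φ' a c ≤ (γ k - L) * breg φ φ' a c :=
    mul_le_mul_of_nonneg_right (by linarith [hγk.1]) hDac0
  -- the key inequality
  have key : (2 * γmin - L) * (μ / 2) * ‖a - c‖ ^ 2
      ≤ ((P₁ c - P₂ c + f c) - (P₁ a - P₂ a + f a))
        + σ * γmax * (ℓφ / 2 * ‖c - p‖ ^ 2) := by
    linarith [h1, h2, h3, hinner, habs, hSC2', hT, hmul1, hmul2, hmul1', hmul2', hmul4]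
  linarith [key]
end
end

section
/- Verifiable stopping criterion for the dual semismooth Newton subsolver of the ℓ_{1−2} regularized least squares subproblem (Proposition 5.1). Let A ∈ ℝ^{m×n}, b ∈ ℝ^m, λ > 0, γ > 0, σ ≥ 0, and let x, ξ ∈ ℝⁿ, z ∈ ℝ^m. Suppose w ∈ ℝⁿ satisfies the proximal optimality condition γ·((γ⁻¹ξ + x − γ⁻¹Aᵀz) − w) ∈ ∂(λ‖·‖₁)(w), and set e := −A w + z + b. Then there exists d ∈ ∂(λ‖·‖₁)(w) such that −Aᵀe = d + Aᵀ(A w − b) − ξ + γ(w − x); equivalently, with P₁(u) := λ‖u‖₁ + (1/2)‖A u − b‖², one has −Aᵀe ∈ ∂P₁(w) − ξ + γ(w − x). In particular, if ‖Aᵀe‖² + |⟨Aᵀe, w − x⟩| ≤ (σγ/2)·‖w − x‖², then the point x⁺ := w with error pair (Δ, δ) := (−Aᵀe, 0) satisfies the inexact optimality condition Δ ∈ ∂_δ P₁(x⁺) − ξ + γ(∇φ(x⁺) − ∇φ(x)) and the stopping criterion ‖Δ‖² + |⟨Δ, x⁺ − x⟩| + δ ≤ σγ·D_φ(x⁺,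 x), where φ(u) := (1/2)‖u‖² (so ∇φ(u) = u and D_φ(u, v) = (1/2)‖u − v‖²). -/
open Filter Topology Bornology RealInnerProductSpace
open scoped Classical

noncomputable section

/-- The `ℓ₁` norm on `ℝⁿ`. -/
def l1norm {n : ℕ} (u : E n) : ℝ := ∑ i, |u i|

/-- **Proposition 5.1.** Verifiable stopping criterion for the dual semismooth Newton
subsolver of the `ℓ_{1−2}` regularized least squares subproblem. -/
theorem ssn_stopping_l12reg
    {m n : ℕ} (A : E n →L[ℝ] E m) (b : E m) (lam γ σ : ℝ)
    (x ξ w : E n) (z e : E m)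
    (hlam : 0 < lam) (hγ : 0 < γ) (hσ : 0 ≤ σ)
    -- `w = prox_{λγ⁻¹‖·‖₁}(γ⁻¹ξ + x − γ⁻¹Aᵀz)`, via its first-order optimality condition
    (hw : γ • ((γ⁻¹ • ξ + x - γ⁻¹ • (ContinuousLinearMap.adjoint A z)) - w)
        ∈ epsSubdiff Set.univ (fun u => lam * l1norm u) 0 w)
    (he : e = -(A w) + z + b) :
    -- there exists `d ∈ ∂(λ‖·‖₁)(w)` with `−Aᵀe = d + Aᵀ(Aw − b) − ξ + γ(w − x)`
    (∃ d ∈ epsSubdiff Set.univ (fun u => lam * l1norm u) 0 w,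
        -(ContinuousLinearMap.adjoint A e)
          = d + ContinuousLinearMap.adjoint A (A w - b) - ξ + γ • (w - x))
    -- equivalently, `−Aᵀe ∈ ∂P₁(w) − ξ + γ(w − x)` with `P₁ = λ‖·‖₁ + ½‖A·−b‖²`
    ∧ (-(ContinuousLinearMap.adjoint A e) + ξ - γ • (w - x)
        ∈ epsSubdiff Set.univ (fun u => lam * l1norm u + 1 / 2 * ‖A u - b‖ ^ 2) 0 w)
    -- in particular, the relative criterion implies the inexact optimality condition
    -- and the stopping criterion with `φ = ½‖·‖²`, `Δ = −Aᵀe`, `δ = 0`, `x⁺ = w`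
    ∧ (‖ContinuousLinearMap.adjoint A e‖ ^ 2
          + |⟪ContinuousLinearMap.adjoint A e, w - x⟫| ≤ σ * γ / 2 * ‖w - x‖ ^ 2 →
        (-(ContinuousLinearMap.adjoint A e) + ξ - γ • (w - x)
            ∈ epsSubdiff Set.univ (fun u => lam * l1norm u + 1 / 2 * ‖A u - b‖ ^ 2) 0 w)
        ∧ ‖-(ContinuousLinearMap.adjoint A e)‖ ^ 2
            + |⟪-(ContinuousLinearMap.adjoint A e), w - x⟫| + 0
            ≤ σ * γ * (1 / 2 * ‖w - x‖ ^ 2)) := by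
  have hne : γ ≠ 0 := ne_of_gt hγ
  set T := ContinuousLinearMap.adjoint A with hT
  set d : E n := γ • ((γ⁻¹ • ξ + x - γ⁻¹ • (T z)) - w) with hd
  have hdval : d = ξ + γ • x - T z - γ • w := by
    rw [hd, smul_sub, smul_sub, smul_add, smul_smul, smul_smul,
      mul_inv_cancel₀ hne, one_smul, one_smul]

  have hkey : -(T e) = d + T (A w - b) - ξ + γ • (w - x) := by
    rw [he, hdval]
    simp only [map_sub, map_add, map_neg, smul_sub]
    abel
  have hsub2 : -(T e) + ξ - γ • (w - x)
      ∈ epsSubdiff Set.univ (fun u => lam * l1norm u + 1 / 2 * ‖A u - b‖ ^ 2) 0 w := by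
    simp only [epsSubdiff, Set.mem_setOf_eq]
    intro y _
    have h1 := hw y (Set.mem_univ y)
    simp only [epsSubdiff, Set.mem_setOf_eq] at h1
    have h2 : (1:ℝ) / 2 * ‖A w - b‖ ^ 2 + ⟪T (A w - b), y - w⟫ ≤ 1 / 2 * ‖A y - b‖ ^ 2 := by
      have hadj : ⟪T (A w - b), y - w⟫ = ⟪A w - b, A y - A w⟫ := by
        rw [hT, ContinuousLinearMap.adjoint_inner_left, map_sub]
      have hsplit : ⟪A w - b, A y - A w⟫ = ⟪A w - b, A y - b⟫ - ‖A w - b‖ ^ 2 := by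
        rw [show A y - A w = (A y - b) - (A w - b) by abel, inner_sub_right,
          real_inner_self_eq_norm_sq]
      have hc := real_inner_le_norm (A w - b) (A y - b)
      rw [hadj, hsplit]
      nlinarith [sq_nonneg (‖A w - b‖ - ‖A y - b‖)]
    have hgeq : -(T e) + ξ - γ • (w - x) = d + T (A w - b) := by
      rw [hkey]; abel
    rw [hgeq, inner_add_left]
    linarith
  refine ⟨⟨d, hw, hkey⟩, hsub2, fun hcrit => ⟨hsub2, ?_⟩⟩
  rw [norm_neg, inner_neg_left, abs_neg]
  linarith
end
end

section
/- Verifiable stopping criterion for the dual semismooth Newton subsolver of the constrained ℓ_{1−2} subproblem (Proposition 5.2). Let A ∈ ℝ^{m×n}, b ∈ ℝ^m, κ > 0, M > 0, γ > 0, σ ≥ 0, and let x, ξ ∈ ℝⁿ, z ∈ ℝ^m. Define g(u) := ‖u‖₁ + ι_{{u : ‖u‖_∞ ≤ M}}(u), the ball B_κ := {u ∈ ℝ^m : ‖u‖ ≤ κ} with projection Π_κ, and φ(u) := (1/2)‖u‖² + (1/2)‖A u‖² (so ∇φ(u) = u + AᵀA u). Suppose w ∈ ℝⁿ satisfies d₁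 := γ·((x + γ⁻¹ξ − γ⁻¹Aᵀz) − w) ∈ ∂g(w), set e := −A w + Π_κ(A x − b + γ⁻¹z) + b, let w̃ ∈ ℝⁿ satisfy ‖A w̃ − b‖ ≤ κ and ‖w̃‖_∞ ≤ M, and define δ¹ := g(w̃) − g(w) − ⟨d₁, w̃ − w⟩, d₂ := γ·((A x − b + γ⁻¹z) − Π_κ(A x − b + γ⁻¹z)), δ² := |⟨e − A(w̃ − w), d₂⟩|, and Δ := −γ Aᵀe + γ(w̃ − w) + γ AᵀA(w̃ − w). Then δ¹ ≥ 0, δ² ≥ 0, and with P₁(u) := g(u) + ι_κ(A u − b) (where ι_κ is the indicator of B_κ) one has Δ ∈ ∂_{δ¹+δ²} P₁(w̃) − ξ + γ(∇φ(w̃) − ∇φ(x)). In particular, if ‖Δ‖² + |⟨Δ, w̃ − x⟩| + δ¹ + δ² ≤ (σγ/2)·(‖w̃ − x‖² + ‖A(w̃ − x)‖²), then the point x⁺ := w̃ with error pair (Δ, δ¹ + δ²) satisfies the inexact optimality condition and the stopping criterion ‖Δ‖² + |⟨Δ, x⁺ − x⟩| + (δ¹+δ²) ≤ σγ·D_φ(x⁺,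 x), since D_φ(u, v) = (1/2)‖u − v‖² + (1/2)‖A(u − v)‖². -/
open Filter Topology Bornology RealInnerProductSpace
open scoped Classical

noncomputable section

/-- The nearest-point projection onto the closed ball `{u : ‖u‖ ≤ κ}`. -/
def projBall {m : ℕ} (κ : ℝ) (v : E m) : E m :=
  if ‖v‖ ≤ κ then v else (κ / ‖v‖) • v

set_option maxHeartbeats 1000000 in
private lemma proj_inner_nonpos {m : ℕ} {κ : ℝ} (hκ : 0 < κ) (v u : E m) (hu : ‖u‖ ≤ κ) :
    ⟪v - projBall κ v, u - projBall κ v⟫ ≤ 0 := by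
  unfold projBall
  split_ifs with h
  · simp
  · push_neg at h
    have hv : 0 < ‖v‖ := hκ.trans h
    have h1 : v - (κ / ‖v‖) • v = (1 - κ / ‖v‖) • v := by
      rw [sub_smul, one_smul]
    rw [h1, real_inner_smul_left]
    have hc : 0 ≤ 1 - κ / ‖v‖ := by
      rw [sub_nonneg, div_le_one hv]; exact h.le
    apply mul_nonpos_of_nonneg_of_nonpos hc
    rw [inner_sub_right, real_inner_smul_right, real_inner_self_eq_norm_sq]
    have : ⟪v, u⟫ ≤ ‖v‖ * κ := (real_inner_le_norm v u).trans (by nlinarith)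
    have h2 : κ / ‖v‖ * ‖v‖ ^ 2 = κ * ‖v‖ := by field_simp
    nlinarith


set_option maxHeartbeats 1000000 in
/-- **Proposition 5.2.** Verifiable stopping criterion for the dual semismooth Newton
subsolver of the constrained `ℓ_{1−2}` subproblem. -/
theorem ssn_stopping_l12con
    {m n : ℕ} (A : E n →L[ℝ] E m) (b : E m) (κ M γ σ : ℝ)
    (x ξ w wt : E n) (z : E m)
    (d1 Δ : E n) (e d2 : E m) (δ1 δ2 : ℝ)
    (hκ : 0 < κ) (hM : 0 < M) (hγ : 0 < γ) (hσ : 0 ≤ σ)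
    -- `d₁ = γ((x + γ⁻¹ξ − γ⁻¹Aᵀz) − w) ∈ ∂g(w)` where `g = ‖·‖₁ + ι_{‖·‖_∞ ≤ M}`,
    -- i.e. `w = prox_{γ⁻¹g}(x + γ⁻¹ξ − γ⁻¹Aᵀz)`
    (hd1def : d1 = γ • ((x + γ⁻¹ • ξ - γ⁻¹ • (ContinuousLinearMap.adjoint A z)) - w))
    (hwdom : ∀ i, |w i| ≤ M)
    (hd1sub : ∀ y : E n, (∀ i, |y i| ≤ M) → l1norm w + ⟪d1, y - w⟫ ≤ l1norm y)
    -- `e := −Aw + Π_κ(Ax − b + γ⁻¹z) + b`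
    (hedef : e = -(A w) + projBall κ (A x - b + γ⁻¹ • z) + b)
    -- `w̃` is feasible for the subproblem
    (hwtfeas1 : ‖A wt - b‖ ≤ κ) (hwtfeas2 : ∀ i, |wt i| ≤ M)
    -- the error quantities
    (hδ1def : δ1 = l1norm wt - l1norm w - ⟪d1, wt - w⟫)
    (hd2def : d2 = γ • ((A x - b + γ⁻¹ • z) - projBall κ (A x - b + γ⁻¹ • z)))
    (hδ2def : δ2 = |⟪e - A (wt - w), d2⟫|)
    (hΔdef : Δ = -(γ • (ContinuousLinearMap.adjoint A e)) + γ • (wt - w)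
        + γ • (ContinuousLinearMap.adjoint A (A (wt - w)))) :
    -- nonnegativity of the error terms
    0 ≤ δ1 ∧ 0 ≤ δ2
    -- `Δ ∈ ∂_{δ¹+δ²}P₁(w̃) − ξ + γ(∇φ(w̃) − ∇φ(x))` with
    -- `P₁ = ‖·‖₁ + ι_{‖·‖_∞ ≤ M} + ι_κ(A·−b)` and `∇φ(u) = u + AᵀAu`
    ∧ (∀ y : E n, (∀ i, |y i| ≤ M) → ‖A y - b‖ ≤ κ →
        l1norm wt
          + ⟪Δ + ξ - γ • ((wt + ContinuousLinearMap.adjoint A (A wt))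
                - (x + ContinuousLinearMap.adjoint A (A x))), y - wt⟫
          - (δ1 + δ2) ≤ l1norm y)
    -- in particular, the relative criterion yields the stopping criterion with
    -- `D_φ(u, v) = ½‖u − v‖² + ½‖A(u − v)‖²`
    ∧ (‖Δ‖ ^ 2 + |⟪Δ, wt - x⟫| + δ1 + δ2
          ≤ σ * γ / 2 * (‖wt - x‖ ^ 2 + ‖A (wt - x)‖ ^ 2) →
        ‖Δ‖ ^ 2 + |⟪Δ, wt - x⟫| + (δ1 + δ2)
          ≤ σ * γ * (1 / 2 * ‖wt - x‖ ^ 2 + 1 / 2 * ‖A (wt - x)‖ ^ 2)) := by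
  have hγ0 : γ ≠ 0 := hγ.ne'
  -- δ1 ≥ 0
  have hδ1 : 0 ≤ δ1 := by
    have := hd1sub wt hwtfeas2
    rw [hδ1def]; linarith
  have hδ2 : 0 ≤ δ2 := hδ2def ▸ abs_nonneg _
  refine ⟨hδ1, hδ2, ?_, ?_⟩
  · -- main subgradient inequality
    intro y hy1 hy2
    -- key algebraic identity
    have key : Δ + ξ - γ • ((wt + ContinuousLinearMap.adjoint A (A wt))
          - (x + ContinuousLinearMap.adjoint A (A x)))
        = d1 + ContinuousLinearMap.adjoint A d2 := by
      rw [hΔdef, hd1def, hd2def, hedef]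
      simp only [map_add, map_sub, map_smul, map_neg, smul_add, smul_sub, smul_smul,
        mul_inv_cancel₀ hγ0, one_smul, smul_neg]
      abel
    rw [key]
    have hinner : ⟪d1 + ContinuousLinearMap.adjoint A d2, y - wt⟫
        = ⟪d1, y - wt⟫ + ⟪d2, A (y - wt)⟫ := by
      rw [inner_add_left, ContinuousLinearMap.adjoint_inner_left]
    rw [hinner]
    -- term from d1
    have h1 : l1norm wt + ⟪d1, y - wt⟫ - δ1 ≤ l1norm y := by
      have := hd1sub y hy1
      have hsplit : ⟪d1, y - w⟫ = ⟪d1, y - wt⟫ + ⟪d1, wt - w⟫ := by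
        rw [← inner_add_right]; congr 1; abel
      rw [hδ1def]; linarith [hsplit ▸ this]
    -- term from d2
    have h2 : ⟪d2, A (y - wt)⟫ ≤ δ2 := by
      set p : E m := projBall κ (A x - b + γ⁻¹ • z) with hp
      have hproj : ⟪d2, A y - b - p⟫ ≤ 0 := by
        rw [hd2def, real_inner_smul_left]
        apply mul_nonpos_of_nonneg_of_nonpos hγ.le
        have := proj_inner_nonpos hκ (A x - b + γ⁻¹ • z) (A y - b) hy2
        have hrw : A y - b - p = (A y - b) - p := rfl
        rw [hrw]; exact this
      have hewt : e - A (wt - w) = -(A wt - b - p) := by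
        rw [hedef]; simp only [map_sub]; abel
      have habs : -⟪d2, A wt - b - p⟫ ≤ δ2 := by
        have heq : ⟪e - A (wt - w), d2⟫ = -⟪d2, A wt - b - p⟫ := by
          rw [hewt, real_inner_comm, inner_neg_right]
        rw [hδ2def, heq]
        exact le_abs_self _
      have hsplit : ⟪d2, A (y - wt)⟫ = ⟪d2, A y - b - p⟫ - ⟪d2, A wt - b - p⟫ := by
        rw [← inner_sub_right]; congr 1
        simp only [map_sub]; abel
      rw [hsplit]; linarith
    linarith
  · intro h
    calc ‖Δ‖ ^ 2 + |⟪Δ, wt - x⟫| + (δ1 + δ2)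
        ≤ σ * γ / 2 * (‖wt - x‖ ^ 2 + ‖A (wt - x)‖ ^ 2) := by linarith
      _ = σ * γ * (1 / 2 * ‖wt - x‖ ^ 2 + 1 / 2 * ‖A (wt - x)‖ ^ 2) := by ring
end
end
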